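/- In the fractional-permission model with stability, the separation-logic assertion pointsto(x.f, 5) * (pointsto(x.f, _) -* pointsto(x.f, 5)), where the wand is required to have a stable footprint, is unsatisfiable: no state satisfies full permission to location l with value 5 separately conjoined with a stable-footprint wand from some-value-at-l to value-5-at-l. -/

import Mathlib

/-- A state of the fractional-permission model: a permission mask
`pi : L → ℚ` (with values in `[0,1]`) and a partial heap `hp : L → Option V`,
subject to the validity condition that positive permission implies a defined value. -/
structure FState (L V : Type) where
  pi : L → ℚ
  hp : L → Option V
  nonneg : ∀ l, 0 ≤ pi l
  le_one : ∀ l, pi l ≤ 1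
  valid : ∀ l, 0 < pi l → (hp l).isSome

/-- Compatibility: heaps agree on the common domain and permissions sum to at most 1. -/
def compat {L V : Type} (s1 s2 : FState L V) : Prop :=
  (∀ l v1 v2, s1.hp l = some v1 → s2.hp l = some v2 → v1 = v2) ∧
  (∀ l, s1.pi l + s2.pi l ≤ 1)

/-- Union of partial heaps. -/
def hunion {V : Type} (o1 o2 : Option V) : Option V :=
  match o1 with
  | some v => some v
  | none => o2

open Classical in
/-- Partial addition of states. -/
noncomputable def fadd {L V : Type} (s1 s2 : FState L V) : Option (FState L V) :=
  if h : compat s1 s2 then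
    some { pi := fun l => s1.pi l + s2.pi l,
           hp := fun l => hunion (s1.hp l) (s2.hp l),
           nonneg := fun l => add_nonneg (s1.nonneg l) (s2.nonneg l),
           le_one := fun l => h.2 l,
           valid := by
             intro l hl
             have hl' : 0 < s1.pi l + s2.pi l := hl
             rcases h1 : s1.hp l with _ | v
             · have h2 : 0 < s2.pi l := by
                 by_contra hc
                 push_neg at hc
                 have hpos : 0 < s1.pi l := by
                   have := s2.nonneg l
                   linarith
                 have := s1.valid l hpos
                 rw [h1] at this
                 simp at this
               have h2' := s2.valid l h2
               simp only [hunion, h1]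
               exact h2'
             · simp [hunion, h1] }
  else none

/-- `t` is the state `s` with all permissions multiplied by `α` (same heap). -/
def isSmul {L V : Type} (α : ℚ) (s t : FState L V) : Prop :=
  (∀ l, t.pi l = α * s.pi l) ∧ t.hp = s.hp

/-- Separating conjunction. -/
def satStar {L V : Type} (A B : FState L V → Prop) (σ : FState L V) : Prop :=
  ∃ σ1 σ2, fadd σ1 σ2 = some σ ∧ A σ1 ∧ B σ2

/-- Fractional assertion `A^p`. -/
def fracSat {L V : Type} (p : ℚ) (A : FState L V → Prop) (σ : FState L V) : Prop :=
  ∃ σ', A σ' ∧ isSmul p σ' σ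

/-- Standard magic wand. -/
def satWand {L V : Type} (A B : FState L V → Prop) (σw : FState L V) : Prop :=
  ∀ σA σ, A σA → fadd σA σw = some σ → B σ

/-- Order induced by ⊕. -/
def fgeq {L V : Type} (σ2 σ1 : FState L V) : Prop :=
  ∃ r, fadd σ1 r = some σ2

/-- `B` is intuitionistic: closed under state extension. -/
def intuit {L V : Type} (B : FState L V → Prop) : Prop :=
  ∀ σ σ' r, B σ → fadd σ r = some σ' → B σ'

/-- `A` is combinable: `A^p * A^q ⊨ A^{p+q}`. -/
def combinable {L V : Type} (A : FState L V → Prop) : Prop :=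
  ∀ p q : ℚ, 0 < p → 0 < q → p + q ≤ 1 →
    ∀ σ, satStar (fracSat p A) (fracSat q A) σ → fracSat (p + q) A σ

/-- Some scaling of `σw` (by `0 < α ≤ 1`) is compatible with `σA`. -/
def scaledCompat {L V : Type} (σA σw : FState L V) : Prop :=
  ∃ α t, 0 < α ∧ α ≤ 1 ∧ isSmul α σw t ∧ compat σA t

/-- Truncation of `σw` so that it fits next to `σA`. -/
def trunc {L V : Type} (sA sw : FState L V) : FState L V :=
  { pi := fun l => min (sw.pi l) (1 - sA.pi l),
    hp := sw.hp,
    nonneg := fun l => le_min (sw.nonneg l) (by linarith [sA.le_one l]),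
    le_one := fun l => le_trans (min_le_left _ _) (sw.le_one l),
    valid := fun l hl => sw.valid l (lt_of_lt_of_le hl (min_le_left _ _)) }

open Classical in
/-- The transformation `R(σA, σw)` used in the definition of combinable wands. -/
noncomputable def Rtrans {L V : Type} (σA σw : FState L V) : FState L V :=
  if scaledCompat σA σw then trunc σA σw else σw

/-- Combinable magic wand `A -*c B`. -/
def satCWand {L V : Type} (A B : FState L V → Prop) (σw : FState L V) : Prop :=
  ∀ σA σ, A σA → fadd σA (Rtrans σA σw) = some σ → B σ

/-- A stable state: positive permission iff the heap value is defined. -/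
def fstable {L V : Type} (σ : FState L V) : Prop :=
  ∀ l, 0 < σ.pi l ↔ (σ.hp l).isSome

open Classical in
/-- The state with permission `q` and value `v` at the single location `l0`. -/
noncomputable def single {L V : Type} (l0 : L) (v : V) (q : ℚ)
    (h0 : 0 ≤ q) (h1 : q ≤ 1) : FState L V :=
  { pi := fun l => if l = l0 then q else 0,
    hp := fun l => if l = l0 then some v else none,
    nonneg := by intro l; by_cases h : l = l0 <;> simp [h, h0]
    le_one := by intro l; by_cases h : l = l0 <;> simp [h, h1]
    valid := by
      intro l hl
      by_cases h : l = l0 <;> simp [h] at hl ⊢ }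

/-- The binary restriction of a state. -/
noncomputable def binState {L V : Type} (σ : FState L V) : FState L V :=
  { pi := fun l => if σ.pi l = 1 then 1 else 0,
    hp := σ.hp,
    nonneg := by intro l; show 0 ≤ if σ.pi l = 1 then (1:ℚ) else 0; split <;> norm_num,
    le_one := by intro l; show (if σ.pi l = 1 then (1:ℚ) else 0) ≤ 1; split <;> norm_num,
    valid := by
      intro l hl
      have hl' : 0 < if σ.pi l = 1 then (1:ℚ) else 0 := hl
      split at hl'
      · next h => exact σ.valid l (by rw [h]; norm_num)
      · simp at hl' }

/-- `A` is a binary assertion. -/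
def binaryAssertion {L V : Type} (A : FState L V → Prop) : Prop :=
  ∀ σ, A σ → A (binState σ)

/-- Heaps agree on the common domain. -/
def heapCompat {L V : Type} (s1 s2 : FState L V) : Prop :=
  ∀ l v1 v2, s1.hp l = some v1 → s2.hp l = some v2 → v1 = v2

/-- `pointsto(x.f, v5)`: full permission to `l0` with value `v5`. -/
def pointstoVal {L V : Type} (l0 : L) (v5 : V) (σ : FState L V) : Prop :=
  σ.pi l0 = 1 ∧ σ.hp l0 = some v5

/-- `pointsto(x.f, _)`: full permission to `l0` with some value. -/
def pointstoAny {L V : Type} (l0 : L) (σ : FState L V) : Prop :=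
  σ.pi l0 = 1 ∧ (σ.hp l0).isSome

/-- The wand with a stable footprint. -/
def satStableWand {L V : Type} (A B : FState L V → Prop) (σw : FState L V) : Prop :=
  fstable σw ∧ ∀ σA σ, A σA → fadd σA σw = some σ → B σ

theorem compat_of_fadd_eq_some {L V : Type} {s1 s2 s : FState L V}
    (h : fadd s1 s2 = some s) : compat s1 s2 := by
  by_contra hc
  simp [fadd, hc] at h

theorem hp_of_fadd_eq_some {L V : Type} {s1 s2 s : FState L V}
    (h : fadd s1 s2 = some s) (l : L) : s.hp l = hunion (s1.hp l) (s2.hp l) := by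
  rw [fadd, dif_pos (compat_of_fadd_eq_some h)] at h
  rw [← Option.some.inj h]

theorem pi_eq_zero_of_compat_of_pi_eq_one {L V : Type} {s1 s2 : FState L V} {l : L}
    (hc : compat s1 s2) (h1 : s1.pi l = 1) : s2.pi l = 0 := by
  have := hc.2 l
  linarith [s2.nonneg l]

theorem fstable.hp_eq_none_of_pi_eq_zero {L V : Type} {σ : FState L V} {l : L}
    (hσ : fstable σ) (h : σ.pi l = 0) : σ.hp l = none := by
  rw [← Option.not_isSome_iff_eq_none, ← hσ l, h]
  exact lt_irrefl 0

theorem fstable.hp_eq_none_of_compat {L V : Type} {σ σw : FState L V} {l : L}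
    (hσw : fstable σw) (hc : compat σ σw) (h1 : σ.pi l = 1) : σw.hp l = none :=
  hσw.hp_eq_none_of_pi_eq_zero (pi_eq_zero_of_compat_of_pi_eq_one hc h1)

theorem compat_single_one {L V : Type} {σ : FState L V} {l0 : L} (v : V)
    (hpi : σ.pi l0 = 0) (hhp : σ.hp l0 = none) :
    compat (single l0 v 1 zero_le_one le_rfl) σ := by
  refine ⟨fun l v1 v2 h1 h2 => ?_, fun l => ?_⟩
  · by_cases hl : l = l0
    · subst hl; simp [hhp] at h2
    · simp [single, hl] at h1
  · by_cases hl : l = l0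
    · subst hl; simp [single, hpi]
    · simpa [single, hl] using σ.le_one l

theorem exists_fadd_eq_some_of_compat {L V : Type} {s1 s2 : FState L V}
    (hc : compat s1 s2) : ∃ s, fadd s1 s2 = some s := by
  simp [fadd, hc]

theorem pointstoAny_single {L V : Type} (l0 : L) (v : V) :
    pointstoAny l0 (single l0 v 1 zero_le_one le_rfl) := by
  simp [pointstoAny, single]

/-- the assertion
`pointsto(x.f, 5) * (pointsto(x.f, _) -* pointsto(x.f, 5))`, where the wand is
required to have a stable footprint, is unsatisfiable (assuming some value
`v'` distinct from `v5` exists). -/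
theorem stable_wand_assertion_unsat {L V : Type} (l0 : L) (v5 v' : V)
    (hv : v' ≠ v5) :
    ¬ ∃ σ : FState L V,
      satStar (pointstoVal l0 v5)
        (satStableWand (pointstoAny l0) (pointstoVal l0 v5)) σ := by
  rintro ⟨σ, σ1, σw, hadd, ⟨hpi1, -⟩, hstable, hwand⟩
  have hc := compat_of_fadd_eq_some hadd
  have hpiw : σw.pi l0 = 0 := pi_eq_zero_of_compat_of_pi_eq_one hc hpi1
  have hhpw : σw.hp l0 = none := hstable.hp_eq_none_of_compat hc hpi1
  -- Feed the wand a full-permission state holding the wrong value `v'`.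
  obtain ⟨σ', hσ'⟩ := exists_fadd_eq_some_of_compat (compat_single_one v' hpiw hhpw)
  have hval : σ'.hp l0 = some v5 := (hwand _ σ' (pointstoAny_single l0 v') hσ').2
  rw [hp_of_fadd_eq_some hσ' l0] at hval
  simp [single, hunion] at hval
  exact hv hval
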